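/- Identification theorem: under potential-outcomes consistency, randomization, independence of the proxy block, no treatment-effect heterogeneity across principal strata (i.e., $E[\varphi(S_1(a), s_2, U_1, u_2)]=0$ for all $a,s_2,u_2$ where $\varphi(s_1,s_2,u_1,u_2)=E[Y(s_1,s_2,u_2)\mid U_1=u_1]-E[Y(s_1,s_2,u_2)]$), existence of a bridge function $h$ with $E[Y-h(S_1,S_2)\mid A]=0$ a.s., and completeness of $g\mapsto E[g(S_1,U_2)\mid A]$, the mean potential long-term outcome satisfies $E[Y(a)] = E[h(S_1,S_2)\mid A=a]$ for every treatment value $a$. -/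
import Mathlib
open Finset
open scoped Classical

noncomputable def dPr {Ω : Type*} [Fintype Ω] (w : Ω → ℝ) (P : Ω → Prop) : ℝ :=
  ∑ ω, if P ω then w ω else 0

noncomputable def dExp {Ω : Type*} [Fintype Ω] (w : Ω → ℝ) (f : Ω → ℝ) : ℝ :=
  ∑ ω, w ω * f ω

section aux
variable {Ω : Type*} [Fintype Ω] (w : Ω → ℝ)

lemma dPr_congr {P Q : Ω → Prop} (h : ∀ ω, P ω ↔ Q ω) : dPr w P = dPr w Q :=
  Finset.sum_congr rfl fun ω _ => by simp [h ω]

lemma dPr_nonneg (hw : ∀ ω, 0 ≤ w ω) (P : Ω → Prop) : 0 ≤ dPr w P :=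
  Finset.sum_nonneg fun ω _ => by split <;> simp [hw ω]

lemma dPr_mono (hw : ∀ ω, 0 ≤ w ω) {P Q : Ω → Prop} (h : ∀ ω, P ω → Q ω) :
    dPr w P ≤ dPr w Q := by
  apply Finset.sum_le_sum
  intro ω _
  by_cases hp : P ω
  · rw [if_pos hp, if_pos (h ω hp)]
  · rw [if_neg hp]; split <;> simp [hw ω]

lemma fiber_sum {β : Type*} (X : Ω → β) (f : Ω → ℝ) :
    ∑ ω, f ω = ∑ b ∈ Finset.univ.image X, ∑ ω, if X ω = b then f ω else 0 := by
  rw [Finset.sum_comm]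
  apply Finset.sum_congr rfl
  intro ω _
  rw [Finset.sum_ite_eq (Finset.univ.image X) (X ω) (fun _ => f ω),
    if_pos (Finset.mem_image_of_mem X (Finset.mem_univ ω))]

lemma exp_indicator (P : Ω → Prop) :
    ∑ ω, w ω * (if P ω then (1:ℝ) else 0) = dPr w P :=
  Finset.sum_congr rfl fun ω _ => by split <;> simp

lemma dPr_fiber_zero {β : Type*} (X : Ω → β) {b : β} (hb : b ∉ Finset.univ.image X) :
    dPr w (fun ω => X ω = b) = 0 := by
  apply Finset.sum_eq_zero
  intro ω _
  rw [if_neg]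
  intro h
  exact hb (h ▸ Finset.mem_image_of_mem X (Finset.mem_univ ω))

lemma exp_comp {β : Type*} (X : Ω → β) (G : β → ℝ) :
    ∑ ω, w ω * G (X ω)
      = ∑ b ∈ Finset.univ.image X, dPr w (fun ω => X ω = b) * G b := by
  rw [fiber_sum X (fun ω => w ω * G (X ω))]
  apply Finset.sum_congr rfl
  intro b _
  rw [dPr, Finset.sum_mul]
  apply Finset.sum_congr rfl
  intro ω _
  by_cases h : X ω = b
  · rw [if_pos h, if_pos h, h]
  · rw [if_neg h, if_neg h, zero_mul]

lemma exp_comp₂ {β₁ β₂ : Type*} (V1 : Ω → β₁) (V2 : Ω → β₂) (G : β₁ → β₂ → ℝ) :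
    ∑ ω, w ω * G (V1 ω) (V2 ω)
      = ∑ x ∈ Finset.univ.image V1, ∑ y ∈ Finset.univ.image V2,
          dPr w (fun ω => V1 ω = x ∧ V2 ω = y) * G x y := by
  have h1 := exp_comp w (fun ω => (V1 ω, V2 ω)) (fun p => G p.1 p.2)
  rw [h1]
  have h2 : ∀ p : β₁ × β₂, dPr w (fun ω => (V1 ω, V2 ω) = p)
      = dPr w (fun ω => V1 ω = p.1 ∧ V2 ω = p.2) :=
    fun p => dPr_congr w (fun ω => Prod.ext_iff)
  calc _ = ∑ p ∈ @Finset.image _ _ (fun a b => Classical.propDecidable (a = b))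
            (fun ω => (V1 ω, V2 ω)) Finset.univ,
          dPr w (fun ω => V1 ω = p.1 ∧ V2 ω = p.2) * G p.1 p.2 := by
        exact Finset.sum_congr rfl fun p _ => by rw [h2 p]
    _ = ∑ p ∈ (Finset.univ.image V1) ×ˢ (Finset.univ.image V2),
          dPr w (fun ω => V1 ω = p.1 ∧ V2 ω = p.2) * G p.1 p.2 := by
        apply Finset.sum_subset
        · intro p hp
          simp only [Finset.mem_image, Finset.mem_univ, true_and] at hp
          obtain ⟨ω, hω⟩ := hp
          simp only [Finset.mem_product, Finset.mem_image, Finset.mem_univ, true_and]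
          exact ⟨⟨ω, congrArg Prod.fst hω⟩, ⟨ω, congrArg Prod.snd hω⟩⟩
        · intro p _ hp
          rw [← h2 p, dPr_fiber_zero w _ hp, zero_mul]
    _ = ∑ x ∈ Finset.univ.image V1, ∑ y ∈ Finset.univ.image V2,
          dPr w (fun ω => V1 ω = x ∧ V2 ω = y) * G x y := by
        rw [Finset.sum_product]
end aux

section aux2
variable {Ω : Type*} [Fintype Ω] (w : Ω → ℝ)

lemma indep_exp {β₁ β₂ : Type*} (V1 : Ω → β₁) (V2 : Ω → β₂)
    (hind : ∀ (B1 : β₁ → Prop) (B2 : β₂ → Prop),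
      dPr w (fun ω => B1 (V1 ω) ∧ B2 (V2 ω)) =
        dPr w (fun ω => B1 (V1 ω)) * dPr w (fun ω => B2 (V2 ω)))
    (f : β₁ → ℝ) (g : β₂ → ℝ) :
    ∑ ω, w ω * (f (V1 ω) * g (V2 ω)) =
      (∑ ω, w ω * f (V1 ω)) * (∑ ω, w ω * g (V2 ω)) := by
  rw [exp_comp₂ w V1 V2 (fun x y => f x * g y), exp_comp w V1 f, exp_comp w V2 g,
    Finset.sum_mul_sum]
  apply Finset.sum_congr rfl
  intro x _
  apply Finset.sum_congr rfl
  intro y _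
  rw [hind (fun v => v = x) (fun v => v = y)]
  ring

lemma condindep_exp (Yf : Ω → ℝ) (Q R : Ω → Prop) (c d : ℝ)
    (hyp : ∀ BY : ℝ → Prop,
      dPr w (fun ω => BY (Yf ω) ∧ Q ω) * c = dPr w (fun ω => BY (Yf ω) ∧ R ω) * d) :
    (∑ ω, if Q ω then w ω * Yf ω else 0) * c =
      (∑ ω, if R ω then w ω * Yf ω else 0) * d := by
  have key : ∀ (P : Ω → Prop), (∑ ω, if P ω then w ω * Yf ω else 0)
      = ∑ y ∈ Finset.univ.image Yf, dPr w (fun ω => Yf ω = y ∧ P ω) * y := by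
    intro P
    rw [fiber_sum Yf (fun ω => if P ω then w ω * Yf ω else 0)]
    apply Finset.sum_congr rfl
    intro y _
    rw [dPr, Finset.sum_mul]
    apply Finset.sum_congr rfl
    intro ω _
    by_cases hy : Yf ω = y
    · by_cases hp : P ω
      · rw [if_pos hy, if_pos hp, if_pos ⟨hy, hp⟩, hy]
      · rw [if_pos hy, if_neg hp, if_neg (fun hc => hp hc.2), zero_mul]
    · rw [if_neg hy, if_neg (fun hc => hy hc.1), zero_mul]
  rw [key Q, key R, Finset.sum_mul, Finset.sum_mul]
  apply Finset.sum_congr rfl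
  intro y _
  have := hyp (fun v => v = y)
  calc dPr w (fun ω => Yf ω = y ∧ Q ω) * y * c
      = dPr w (fun ω => Yf ω = y ∧ Q ω) * c * y := by ring
    _ = dPr w (fun ω => Yf ω = y ∧ R ω) * d * y := by rw [this]
    _ = dPr w (fun ω => Yf ω = y ∧ R ω) * y * d := by ring

lemma dPr_pos_elim (P : Ω → Prop) (h : 0 < dPr w P) : ∃ ω, P ω := by
  by_contra hc
  push_neg at hc
  have : dPr w P = 0 := Finset.sum_eq_zero fun ω _ => if_neg (hc ω)
  rw [this] at h
  exact lt_irrefl 0 h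
end aux2

/-- Identification: under consistency, randomization, proxy-block
independence, no treatment-effect heterogeneity across principal strata, bridge
existence and completeness, E[Y(a)] = E[h(S₁,S₂) ∣ A = a]. -/
theorem stmt3
    {Ω 𝒜 𝒮₁ 𝒮₂ 𝒰₁ 𝒰₂ : Type*} [Fintype Ω] [Fintype 𝒜]
    (w : Ω → ℝ) (hw : ∀ ω, 0 ≤ w ω) (hw1 : ∑ ω, w ω = 1)
    (A : Ω → 𝒜) (U1 : Ω → 𝒰₁)
    (S1po : 𝒜 → Ω → 𝒮₁) (U2po : 𝒜 → Ω → 𝒰₂) (S2po : 𝒰₂ → Ω → 𝒮₂)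
    (Ypo : 𝒮₁ → 𝒮₂ → 𝒰₂ → Ω → ℝ)
    (S1 : Ω → 𝒮₁) (U2 : Ω → 𝒰₂) (S2 : Ω → 𝒮₂) (Y : Ω → ℝ)
    -- consistency of observed variables
    (hS1 : ∀ ω, S1 ω = S1po (A ω) ω) (hU2 : ∀ ω, U2 ω = U2po (A ω) ω)
    (hS2 : ∀ ω, S2 ω = S2po (U2 ω) ω)
    (hY : ∀ ω, Y ω = Ypo (S1 ω) (S2 ω) (U2 ω) ω)
    -- (U₁, (Y(s₁,s₂,u₂)), (S₁(a))) jointly independent of ((U₂(a)), (S₂(u₂)))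
    (hblock : ∀ (B1 : 𝒰₁ × (𝒜 → 𝒮₁) × (𝒮₁ → 𝒮₂ → 𝒰₂ → ℝ) → Prop)
        (B2 : (𝒜 → 𝒰₂) × (𝒰₂ → 𝒮₂) → Prop),
      dPr w (fun ω =>
          B1 (U1 ω, fun a => S1po a ω, fun s₁ s₂ u₂ => Ypo s₁ s₂ u₂ ω) ∧
          B2 (fun a => U2po a ω, fun u => S2po u ω))
        = dPr w (fun ω =>
            B1 (U1 ω, fun a => S1po a ω, fun s₁ s₂ u₂ => Ypo s₁ s₂ u₂ ω))
          * dPr w (fun ω => B2 (fun a => U2po a ω, fun u => S2po u ω)))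
    -- Y(s₁,s₂,u₂) ⊥ S₁(a) ∣ U₁
    (hYS1 : ∀ (s₁ : 𝒮₁) (s₂ : 𝒮₂) (u₂ : 𝒰₂) (a : 𝒜) (u₁ : 𝒰₁)
        (BY : ℝ → Prop) (s₁' : 𝒮₁),
      dPr w (fun ω => BY (Ypo s₁ s₂ u₂ ω) ∧ S1po a ω = s₁' ∧ U1 ω = u₁)
          * dPr w (fun ω => U1 ω = u₁)
        = dPr w (fun ω => BY (Ypo s₁ s₂ u₂ ω) ∧ U1 ω = u₁)
          * dPr w (fun ω => S1po a ω = s₁' ∧ U1 ω = u₁))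
    -- U₂(a) ⊥ S₂(u₂)
    (hU2S2 : ∀ (a : 𝒜) (u : 𝒰₂) (B1 : 𝒰₂ → Prop) (B2 : 𝒮₂ → Prop),
      dPr w (fun ω => B1 (U2po a ω) ∧ B2 (S2po u ω))
        = dPr w (fun ω => B1 (U2po a ω)) * dPr w (fun ω => B2 (S2po u ω)))
    -- randomization: A ⊥ (U₁ and all potential outcomes)
    (hrand : ∀ (C : 𝒜 → Prop)
        (B : 𝒰₁ × (𝒜 → 𝒮₁) × (𝒜 → 𝒰₂) × (𝒰₂ → 𝒮₂) ×
             (𝒮₁ → 𝒮₂ → 𝒰₂ → ℝ) → Prop),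
      dPr w (fun ω => C (A ω) ∧
          B (U1 ω, fun a => S1po a ω, fun a => U2po a ω, fun u => S2po u ω,
             fun s₁ s₂ u₂ => Ypo s₁ s₂ u₂ ω))
        = dPr w (fun ω => C (A ω))
          * dPr w (fun ω =>
              B (U1 ω, fun a => S1po a ω, fun a => U2po a ω, fun u => S2po u ω,
                 fun s₁ s₂ u₂ => Ypo s₁ s₂ u₂ ω)))
    -- support of U₁
    (hU1pos : ∀ u₁ : 𝒰₁, 0 < dPr w (fun ω => U1 ω = u₁))
    -- no treatment-effect heterogeneity across principal strata:
    -- E[φ(S₁(a), s₂, U₁, u₂)] = 0 where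
    -- φ(s₁,s₂,u₁,u₂) = E[Y(s₁,s₂,u₂)∣U₁=u₁] - E[Y(s₁,s₂,u₂)]
    (hstrata : ∀ (a : 𝒜) (s₂ : 𝒮₂) (u₂ : 𝒰₂),
      dExp w (fun ω =>
        dExp w (fun ω' => if U1 ω' = U1 ω then Ypo (S1po a ω) s₂ u₂ ω' else 0)
            / dPr w (fun ω' => U1 ω' = U1 ω)
          - dExp w (fun ω' => Ypo (S1po a ω) s₂ u₂ ω')) = 0)
    (h : 𝒮₁ → 𝒮₂ → ℝ)
    -- bridge: E[Y - h(S₁,S₂) ∣ A] = 0 a.s.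
    (hbridge : ∀ a : 𝒜, 0 < dPr w (fun ω => A ω = a) →
      dExp w (fun ω => if A ω = a then Y ω - h (S1 ω) (S2 ω) else 0) = 0)
    -- completeness of g ↦ E[g(S₁,U₂) ∣ A]
    (hcomp : ∀ g : 𝒮₁ → 𝒰₂ → ℝ,
      (∀ a : 𝒜, 0 < dPr w (fun ω => A ω = a) →
        dExp w (fun ω => if A ω = a then g (S1 ω) (U2 ω) else 0) = 0) →
      ∀ (s₁ : 𝒮₁) (u₂ : 𝒰₂), 0 < dPr w (fun ω => S1 ω = s₁ ∧ U2 ω = u₂) →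
        g s₁ u₂ = 0)
    (a : 𝒜) (ha : 0 < dPr w (fun ω => A ω = a)) :
    dExp w (fun ω => Ypo (S1po a ω) (S2po (U2po a ω) ω) (U2po a ω) ω)
      = dExp w (fun ω => if A ω = a then h (S1 ω) (S2 ω) else 0)
        / dPr w (fun ω => A ω = a) := by
  -- Shorthand for the two proxy-block "vectors" is implicit; we work explicitly.
  -- q : the bridge discrepancy function
  set q : 𝒮₁ → 𝒰₂ → ℝ := fun s₁ u₂ =>
    ∑ s₂ ∈ Finset.univ.image (S2po u₂),
      dPr w (fun ω => S2po u₂ ω = s₂) *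
        ((∑ ω, w ω * Ypo s₁ s₂ u₂ ω) - h s₁ s₂) with hq
  -- KEY B : strata homogeneity + conditional independence
  have keyB : ∀ (a' : 𝒜) (s₂ : 𝒮₂) (u₂ : 𝒰₂),
      (∑ ω, w ω * Ypo (S1po a' ω) s₂ u₂ ω)
        = ∑ s₁ ∈ Finset.univ.image (S1po a'),
            dPr w (fun ω => S1po a' ω = s₁) * (∑ ω, w ω * Ypo s₁ s₂ u₂ ω) := by
    intro a' s₂ u₂
    set CE : 𝒮₁ → 𝒰₁ → ℝ := fun s₁ u₁ =>
      (∑ ω, if U1 ω = u₁ then w ω * Ypo s₁ s₂ u₂ ω else 0)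
        / dPr w (fun ω => U1 ω = u₁) with hCE
    have st1 : (∑ ω, w ω * Ypo (S1po a' ω) s₂ u₂ ω)
        = ∑ p ∈ @Finset.image _ _ (fun x y => Classical.propDecidable (x = y))
              (fun ω => (S1po a' ω, U1 ω)) Finset.univ,
            ∑ ω, @ite _ (S1po a' ω = p.1 ∧ U1 ω = p.2) (Classical.propDecidable _)
              (w ω * Ypo p.1 s₂ u₂ ω) 0 := by
      rw [fiber_sum (fun ω => (S1po a' ω, U1 ω)) (fun ω => w ω * Ypo (S1po a' ω) s₂ u₂ ω)]
      apply Finset.sum_congr rfl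
      intro p _
      apply Finset.sum_congr rfl
      intro ω _
      by_cases hc : S1po a' ω = p.1 ∧ U1 ω = p.2
      · rw [if_pos (Prod.ext_iff.2 hc), if_pos hc, hc.1]
      · rw [if_neg (fun hp => hc (Prod.ext_iff.1 hp)), if_neg hc]
    have st2 : ∀ (s₁ : 𝒮₁) (u₁ : 𝒰₁),
        (∑ ω, @ite _ (S1po a' ω = s₁ ∧ U1 ω = u₁) (Classical.propDecidable _)
            (w ω * Ypo s₁ s₂ u₂ ω) 0)
          = dPr w (fun ω => S1po a' ω = s₁ ∧ U1 ω = u₁) * CE s₁ u₁ := by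
      intro s₁ u₁
      have hPU : dPr w (fun ω => U1 ω = u₁) ≠ 0 := ne_of_gt (hU1pos u₁)
      have hci :=
        condindep_exp w (Ypo s₁ s₂ u₂) (fun ω => S1po a' ω = s₁ ∧ U1 ω = u₁)
          (fun ω => U1 ω = u₁) (dPr w (fun ω => U1 ω = u₁))
          (dPr w (fun ω => S1po a' ω = s₁ ∧ U1 ω = u₁))
          (fun BY => hYS1 s₁ s₂ u₂ a' u₁ BY s₁)
      simp only [hCE]
      rw [← mul_div_assoc, eq_div_iff hPU]
      linear_combination hci
    have st3 : (∑ ω, w ω * Ypo (S1po a' ω) s₂ u₂ ω)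
        = ∑ ω, w ω * CE (S1po a' ω) (U1 ω) := by
      rw [st1, exp_comp w (fun ω => (S1po a' ω, U1 ω)) (fun p => CE p.1 p.2)]
      apply Finset.sum_congr rfl
      intro p _
      rw [st2 p.1 p.2, dPr_congr w (fun ω => (Prod.ext_iff :
        (S1po a' ω, U1 ω) = p ↔ _))]
    have hstr : ∑ ω, w ω * (CE (S1po a' ω) (U1 ω)
        - (∑ ω', w ω' * Ypo (S1po a' ω) s₂ u₂ ω')) = 0 := by
      have h0 := hstrata a' s₂ u₂
      simp only [dExp] at h0
      rw [← h0]
      apply Finset.sum_congr rfl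
      intro ω _
      congr 2
      simp only [hCE]
      congr 1
      apply Finset.sum_congr rfl
      intro ω' _
      by_cases hc : U1 ω' = U1 ω <;> simp [hc]
    have st4 : (∑ ω, w ω * CE (S1po a' ω) (U1 ω))
        = ∑ ω, w ω * (∑ ω', w ω' * Ypo (S1po a' ω) s₂ u₂ ω') := by
      have h2 : ∑ ω, (w ω * CE (S1po a' ω) (U1 ω)
          - w ω * (∑ ω', w ω' * Ypo (S1po a' ω) s₂ u₂ ω')) = 0 := by
        rw [← hstr]
        exact Finset.sum_congr rfl fun ω _ => (mul_sub (w ω) _ _).symm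
      rw [Finset.sum_sub_distrib] at h2
      linarith
    rw [st3, st4, exp_comp w (S1po a') (fun s₁ => ∑ ω', w ω' * Ypo s₁ s₂ u₂ ω')]
  -- KEY AC : block independence decomposition over (u₂, s₂) fibers
  have keyAC : ∀ (a' : 𝒜)
      (K : (𝒰₁ × (𝒜 → 𝒮₁) × (𝒮₁ → 𝒮₂ → 𝒰₂ → ℝ)) → 𝒮₂ → 𝒰₂ → ℝ),
      (∑ ω, w ω * K (U1 ω, fun a'' => S1po a'' ω, fun x y z => Ypo x y z ω)
          (S2po (U2po a' ω) ω) (U2po a' ω))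
        = ∑ u₂ ∈ Finset.univ.image (U2po a'), ∑ s₂ ∈ Finset.univ.image (S2po u₂),
            dPr w (fun ω => U2po a' ω = u₂) * dPr w (fun ω => S2po u₂ ω = s₂)
              * (∑ ω, w ω * K (U1 ω, fun a'' => S1po a'' ω, fun x y z => Ypo x y z ω)
                  s₂ u₂) := by
    intro a' K
    rw [fiber_sum (U2po a') (fun ω => w ω *
      K (U1 ω, fun a'' => S1po a'' ω, fun x y z => Ypo x y z ω)
        (S2po (U2po a' ω) ω) (U2po a' ω))]
    apply Finset.sum_congr rfl
    intro u₂ _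
    have hrw : ∀ ω : Ω, (if U2po a' ω = u₂ then w ω *
          K (U1 ω, fun a'' => S1po a'' ω, fun x y z => Ypo x y z ω)
            (S2po (U2po a' ω) ω) (U2po a' ω) else 0)
        = (if U2po a' ω = u₂ then w ω *
            K (U1 ω, fun a'' => S1po a'' ω, fun x y z => Ypo x y z ω)
              (S2po u₂ ω) u₂ else 0) := by
      intro ω
      by_cases hc : U2po a' ω = u₂
      · rw [if_pos hc, if_pos hc, hc]
      · rw [if_neg hc, if_neg hc]
    rw [Finset.sum_congr rfl (fun ω _ => hrw ω)]
    rw [fiber_sum (S2po u₂) (fun ω => if U2po a' ω = u₂ then w ω *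
      K (U1 ω, fun a'' => S1po a'' ω, fun x y z => Ypo x y z ω) (S2po u₂ ω) u₂ else 0)]
    apply Finset.sum_congr rfl
    intro s₂ _
    have hrw2 : ∀ ω : Ω, (if S2po u₂ ω = s₂ then
          (if U2po a' ω = u₂ then w ω *
            K (U1 ω, fun a'' => S1po a'' ω, fun x y z => Ypo x y z ω)
              (S2po u₂ ω) u₂ else 0) else 0)
        = w ω * (K (U1 ω, fun a'' => S1po a'' ω, fun x y z => Ypo x y z ω) s₂ u₂
            * (@ite _ (U2po a' ω = u₂ ∧ S2po u₂ ω = s₂)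
                (Classical.propDecidable _) (1:ℝ) 0)) := by
      intro ω
      by_cases h1 : S2po u₂ ω = s₂ <;> by_cases h2 : U2po a' ω = u₂ <;>
        simp [h1, h2]
    rw [Finset.sum_congr rfl (fun ω _ => hrw2 ω)]
    have hIE : (∑ ω, w ω *
          (K (U1 ω, fun a'' => S1po a'' ω, fun x y z => Ypo x y z ω) s₂ u₂
            * (@ite _ (U2po a' ω = u₂ ∧ S2po u₂ ω = s₂)
                (Classical.propDecidable _) (1:ℝ) 0)))
        = (∑ ω, w ω * K (U1 ω, fun a'' => S1po a'' ω, fun x y z => Ypo x y z ω) s₂ u₂)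
          * (∑ ω, w ω * (@ite _ (U2po a' ω = u₂ ∧ S2po u₂ ω = s₂)
                (Classical.propDecidable _) (1:ℝ) 0)) :=
      indep_exp w _ _ hblock (fun v => K v s₂ u₂)
        (fun v => @ite _ (v.1 a' = u₂ ∧ v.2 u₂ = s₂) (Classical.propDecidable _) (1:ℝ) 0)
    rw [hIE, exp_indicator w (fun ω => U2po a' ω = u₂ ∧ S2po u₂ ω = s₂)]
    have h22 : dPr w (fun ω => U2po a' ω = u₂ ∧ S2po u₂ ω = s₂)
        = dPr w (fun ω => U2po a' ω = u₂) * dPr w (fun ω => S2po u₂ ω = s₂) :=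
      hU2S2 a' u₂ (fun v => v = u₂) (fun v => v = s₂)
    rw [h22]
    ring
  -- specialize keyAC
  have keyA : ∀ (a' : 𝒜),
      (∑ ω, w ω * Ypo (S1po a' ω) (S2po (U2po a' ω) ω) (U2po a' ω) ω)
        = ∑ u₂ ∈ Finset.univ.image (U2po a'), ∑ s₂ ∈ Finset.univ.image (S2po u₂),
            dPr w (fun ω => U2po a' ω = u₂) * dPr w (fun ω => S2po u₂ ω = s₂)
              * (∑ ω, w ω * Ypo (S1po a' ω) s₂ u₂ ω) :=
    fun a' => keyAC a' (fun v y z => v.2.2 (v.2.1 a') y z)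
  have keyC : ∀ (a' : 𝒜),
      (∑ ω, w ω * h (S1po a' ω) (S2po (U2po a' ω) ω))
        = ∑ u₂ ∈ Finset.univ.image (U2po a'), ∑ s₂ ∈ Finset.univ.image (S2po u₂),
            dPr w (fun ω => U2po a' ω = u₂) * dPr w (fun ω => S2po u₂ ω = s₂)
              * (∑ ω, w ω * h (S1po a' ω) s₂) :=
    fun a' => keyAC a' (fun v y _ => h (v.2.1 a') y)
  -- Δ computation
  have hDelta : ∀ (a' : 𝒜),
      (∑ ω, w ω * Ypo (S1po a' ω) (S2po (U2po a' ω) ω) (U2po a' ω) ω)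
          - (∑ ω, w ω * h (S1po a' ω) (S2po (U2po a' ω) ω))
        = ∑ u₂ ∈ Finset.univ.image (U2po a'), ∑ s₁ ∈ Finset.univ.image (S1po a'),
            dPr w (fun ω => U2po a' ω = u₂) * dPr w (fun ω => S1po a' ω = s₁)
              * q s₁ u₂ := by
    intro a'
    rw [keyA a', keyC a', ← Finset.sum_sub_distrib]
    apply Finset.sum_congr rfl
    intro u₂ _
    rw [← Finset.sum_sub_distrib]
    calc ∑ s₂ ∈ Finset.univ.image (S2po u₂),
          (dPr w (fun ω => U2po a' ω = u₂) * dPr w (fun ω => S2po u₂ ω = s₂)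
              * (∑ ω, w ω * Ypo (S1po a' ω) s₂ u₂ ω)
            - dPr w (fun ω => U2po a' ω = u₂) * dPr w (fun ω => S2po u₂ ω = s₂)
              * (∑ ω, w ω * h (S1po a' ω) s₂))
        = ∑ s₂ ∈ Finset.univ.image (S2po u₂), ∑ s₁ ∈ Finset.univ.image (S1po a'),
            dPr w (fun ω => U2po a' ω = u₂) * dPr w (fun ω => S1po a' ω = s₁)
              * (dPr w (fun ω => S2po u₂ ω = s₂)
                  * ((∑ ω, w ω * Ypo s₁ s₂ u₂ ω) - h s₁ s₂)) := by
          apply Finset.sum_congr rfl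
          intro s₂ _
          rw [keyB a' s₂ u₂, exp_comp w (S1po a') (fun s₁ => h s₁ s₂),
            ← mul_sub, ← Finset.sum_sub_distrib, Finset.mul_sum]
          apply Finset.sum_congr rfl
          intro s₁ _
          rw [← mul_sub]
          ring
      _ = ∑ s₁ ∈ Finset.univ.image (S1po a'), ∑ s₂ ∈ Finset.univ.image (S2po u₂),
            dPr w (fun ω => U2po a' ω = u₂) * dPr w (fun ω => S1po a' ω = s₁)
              * (dPr w (fun ω => S2po u₂ ω = s₂)
                  * ((∑ ω, w ω * Ypo s₁ s₂ u₂ ω) - h s₁ s₂)) := Finset.sum_comm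
      _ = ∑ s₁ ∈ Finset.univ.image (S1po a'),
            dPr w (fun ω => U2po a' ω = u₂) * dPr w (fun ω => S1po a' ω = s₁)
              * q s₁ u₂ := by
          apply Finset.sum_congr rfl
          intro s₁ _
          rw [← Finset.mul_sum]
  -- KEY D : observable representation of q
  have keyD : ∀ (a' : 𝒜),
      (∑ ω, w ω * q (S1po a' ω) (U2po a' ω))
        = ∑ s₁ ∈ Finset.univ.image (S1po a'), ∑ u₂ ∈ Finset.univ.image (U2po a'),
            dPr w (fun ω => S1po a' ω = s₁) * dPr w (fun ω => U2po a' ω = u₂)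
              * q s₁ u₂ := by
    intro a'
    rw [exp_comp₂ w (S1po a') (U2po a') q]
    apply Finset.sum_congr rfl
    intro s₁ _
    apply Finset.sum_congr rfl
    intro u₂ _
    have hfac : dPr w (fun ω => S1po a' ω = s₁ ∧ U2po a' ω = u₂)
        = dPr w (fun ω => S1po a' ω = s₁) * dPr w (fun ω => U2po a' ω = u₂) :=
      hblock (fun v => v.2.1 a' = s₁) (fun v => v.1 a' = u₂)
    rw [hfac]
  -- KEY E : randomization transfer
  have keyE : ∀ (a' : 𝒜)
      (F : (𝒰₁ × (𝒜 → 𝒮₁) × (𝒜 → 𝒰₂) × (𝒰₂ → 𝒮₂) × (𝒮₁ → 𝒮₂ → 𝒰₂ → ℝ)) → ℝ),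
      (∑ ω, if A ω = a' then w ω * F (U1 ω, fun a'' => S1po a'' ω,
          fun a'' => U2po a'' ω, fun u => S2po u ω, fun x y z => Ypo x y z ω) else 0)
        = dPr w (fun ω => A ω = a')
          * (∑ ω, w ω * F (U1 ω, fun a'' => S1po a'' ω,
              fun a'' => U2po a'' ω, fun u => S2po u ω, fun x y z => Ypo x y z ω)) := by
    intro a' F
    have hIE : (∑ ω, w ω * ((if A ω = a' then (1:ℝ) else 0)
          * F (U1 ω, fun a'' => S1po a'' ω, fun a'' => U2po a'' ω,
              fun u => S2po u ω, fun x y z => Ypo x y z ω)))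
        = (∑ ω, w ω * (if A ω = a' then (1:ℝ) else 0))
          * (∑ ω, w ω * F (U1 ω, fun a'' => S1po a'' ω, fun a'' => U2po a'' ω,
              fun u => S2po u ω, fun x y z => Ypo x y z ω)) :=
      indep_exp w A _ hrand (fun x => if x = a' then (1:ℝ) else 0) F
    rw [exp_indicator w (fun ω => A ω = a')] at hIE
    rw [← hIE]
    apply Finset.sum_congr rfl
    intro ω _
    by_cases hA : A ω = a' <;> simp [hA]
  -- bridge in potential-outcome form
  have hbridge' : ∀ (a' : 𝒜), 0 < dPr w (fun ω => A ω = a') →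
      (∑ ω, w ω * Ypo (S1po a' ω) (S2po (U2po a' ω) ω) (U2po a' ω) ω)
        = (∑ ω, w ω * h (S1po a' ω) (S2po (U2po a' ω) ω)) := by
    intro a' hpa
    have h0 := hbridge a' hpa
    simp only [dExp] at h0
    have h1 : (∑ ω, if A ω = a' then w ω *
          (Ypo (S1po a' ω) (S2po (U2po a' ω) ω) (U2po a' ω) ω
            - h (S1po a' ω) (S2po (U2po a' ω) ω)) else 0) = 0 := by
      refine Eq.trans ?_ h0
      apply Finset.sum_congr rfl
      intro ω _
      by_cases hA : A ω = a'
      · rw [if_pos hA, if_pos hA, hY ω, hS2 ω, hS1 ω, hU2 ω, hA]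
      · rw [if_neg hA, if_neg hA, mul_zero]
    have h2 : (∑ ω, if A ω = a' then w ω *
          (Ypo (S1po a' ω) (S2po (U2po a' ω) ω) (U2po a' ω) ω
            - h (S1po a' ω) (S2po (U2po a' ω) ω)) else 0)
        = dPr w (fun ω => A ω = a')
          * (∑ ω, w ω * (Ypo (S1po a' ω) (S2po (U2po a' ω) ω) (U2po a' ω) ω
              - h (S1po a' ω) (S2po (U2po a' ω) ω))) :=
      keyE a' (fun v => v.2.2.2.2 (v.2.1 a') (v.2.2.2.1 (v.2.2.1 a')) (v.2.2.1 a')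
        - h (v.2.1 a') (v.2.2.2.1 (v.2.2.1 a')))
    rw [h2] at h1
    have h3 : (∑ ω, w ω * (Ypo (S1po a' ω) (S2po (U2po a' ω) ω) (U2po a' ω) ω
        - h (S1po a' ω) (S2po (U2po a' ω) ω))) = 0 := by
      rcases mul_eq_zero.1 h1 with hz | hz
      · exact absurd hz (ne_of_gt hpa)
      · exact hz
    have h4 : (∑ ω, (w ω * Ypo (S1po a' ω) (S2po (U2po a' ω) ω) (U2po a' ω) ω
        - w ω * h (S1po a' ω) (S2po (U2po a' ω) ω))) = 0 := by
      rw [← h3]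
      exact Finset.sum_congr rfl fun ω _ => (mul_sub (w ω) _ _).symm
    rw [Finset.sum_sub_distrib] at h4
    linarith
  -- completeness gives q = 0 on the observed support
  have hq0 : ∀ (s₁ : 𝒮₁) (u₂ : 𝒰₂),
      0 < dPr w (fun ω => S1 ω = s₁ ∧ U2 ω = u₂) → q s₁ u₂ = 0 := by
    apply hcomp
    intro a' hpa
    simp only [dExp]
    have h1 : (∑ ω, w ω * (if A ω = a' then q (S1 ω) (U2 ω) else 0))
        = ∑ ω, if A ω = a' then w ω * q (S1po a' ω) (U2po a' ω) else 0 := by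
      apply Finset.sum_congr rfl
      intro ω _
      by_cases hA : A ω = a'
      · rw [if_pos hA, if_pos hA, hS1 ω, hU2 ω, hA]
      · rw [if_neg hA, if_neg hA, mul_zero]
    have h2 : (∑ ω, if A ω = a' then w ω * q (S1po a' ω) (U2po a' ω) else 0)
        = dPr w (fun ω => A ω = a') * (∑ ω, w ω * q (S1po a' ω) (U2po a' ω)) :=
      keyE a' (fun v => q (v.2.1 a') (v.2.2.1 a'))
    rw [h1, h2, keyD a']
    have h3 : (∑ s₁ ∈ Finset.univ.image (S1po a'), ∑ u₂ ∈ Finset.univ.image (U2po a'),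
          dPr w (fun ω => S1po a' ω = s₁) * dPr w (fun ω => U2po a' ω = u₂) * q s₁ u₂)
        = (∑ ω, w ω * Ypo (S1po a' ω) (S2po (U2po a' ω) ω) (U2po a' ω) ω)
          - (∑ ω, w ω * h (S1po a' ω) (S2po (U2po a' ω) ω)) := by
      rw [hDelta a', Finset.sum_comm]
      apply Finset.sum_congr rfl
      intro s₁ _
      apply Finset.sum_congr rfl
      intro u₂ _
      ring
    rw [h3, hbridge' a' hpa, sub_self, mul_zero]
  -- support lower bound
  have keyF : ∀ (s₁ : 𝒮₁) (u₂ : 𝒰₂),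
      dPr w (fun ω => A ω = a)
          * (dPr w (fun ω => S1po a ω = s₁) * dPr w (fun ω => U2po a ω = u₂))
        ≤ dPr w (fun ω => S1 ω = s₁ ∧ U2 ω = u₂) := by
    intro s₁ u₂
    have hr : dPr w (fun ω => A ω = a ∧ (S1po a ω = s₁ ∧ U2po a ω = u₂))
        = dPr w (fun ω => A ω = a)
          * dPr w (fun ω => S1po a ω = s₁ ∧ U2po a ω = u₂) :=
      hrand (fun x => x = a) (fun v => v.2.1 a = s₁ ∧ v.2.2.1 a = u₂)
    have hb2 : dPr w (fun ω => S1po a ω = s₁ ∧ U2po a ω = u₂)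
        = dPr w (fun ω => S1po a ω = s₁) * dPr w (fun ω => U2po a ω = u₂) :=
      hblock (fun v => v.2.1 a = s₁) (fun v => v.1 a = u₂)
    calc dPr w (fun ω => A ω = a)
          * (dPr w (fun ω => S1po a ω = s₁) * dPr w (fun ω => U2po a ω = u₂))
        = dPr w (fun ω => A ω = a ∧ (S1po a ω = s₁ ∧ U2po a ω = u₂)) := by
          rw [hr, hb2]
      _ ≤ dPr w (fun ω => S1 ω = s₁ ∧ U2 ω = u₂) := by
          apply dPr_mono w hw
          rintro ω ⟨hA, h1', h2'⟩
          exact ⟨by rw [hS1 ω, hA]; exact h1', by rw [hU2 ω, hA]; exact h2'⟩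
  -- final assembly
  simp only [dExp]
  have hnum : (∑ ω, w ω * (if A ω = a then h (S1 ω) (S2 ω) else 0))
      = dPr w (fun ω => A ω = a)
        * (∑ ω, w ω * h (S1po a ω) (S2po (U2po a ω) ω)) := by
    have h1 : (∑ ω, w ω * (if A ω = a then h (S1 ω) (S2 ω) else 0))
        = ∑ ω, if A ω = a then w ω * h (S1po a ω) (S2po (U2po a ω) ω) else 0 := by
      apply Finset.sum_congr rfl
      intro ω _
      by_cases hA : A ω = a
      · rw [if_pos hA, if_pos hA, hS2 ω, hS1 ω, hU2 ω, hA]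
      · rw [if_neg hA, if_neg hA, mul_zero]
    rw [h1]
    exact keyE a (fun v => h (v.2.1 a) (v.2.2.2.1 (v.2.2.1 a)))
  rw [hnum, mul_comm, mul_div_assoc, div_self (ne_of_gt ha), mul_one]
  have hzero : (∑ ω, w ω * Ypo (S1po a ω) (S2po (U2po a ω) ω) (U2po a ω) ω)
      - (∑ ω, w ω * h (S1po a ω) (S2po (U2po a ω) ω)) = 0 := by
    rw [hDelta a]
    apply Finset.sum_eq_zero
    intro u₂ _
    apply Finset.sum_eq_zero
    intro s₁ _
    rcases eq_or_lt_of_le (dPr_nonneg w hw (fun ω => U2po a ω = u₂)) with h2 | h2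
    · rw [← h2]; ring
    rcases eq_or_lt_of_le (dPr_nonneg w hw (fun ω => S1po a ω = s₁)) with h1 | h1
    · rw [← h1]; ring
    have hjoint : 0 < dPr w (fun ω => S1 ω = s₁ ∧ U2 ω = u₂) :=
      lt_of_lt_of_le (mul_pos ha (mul_pos h1 h2)) (keyF s₁ u₂)
    rw [hq0 s₁ u₂ hjoint, mul_zero]
  linarith
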